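/- Let F be a field and T an n×n matrix polynomial over F that is block upper triangular with respect to a partition 0 = n_0 < n_1 < ⋯ < n_s = n (i.e. T_{ij} = 0 whenever the index i lies in a later index block [n_t, n_{t+1}) than the index j), and suppose for each t the diagonal block of T on the t-th index block is strictly regular, say of degree d_t with invertible leading coefficient. Then there exists an n×n matrix polynomial T̃ over F, block upper triangular with respect to the same partition, unimodularly equivalent to T, whose diagonal blocks coincide with those of T, and such that for all t < u every entry of T̃ with row index in the t-th block and column index in the u-th block is either zero or has degree strictly less than min(d_t, d_u). -/

import Mathlib

/-
An off-diagonal block `(t, u)` can be reduced modulo whichever diagonal block has the smaller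
degree. If `d t ≤ d u`, divide it on the left by `T_tt` (division with remainder works because
the leading coefficient is invertible) and clear the quotient by a unimodular column operation;
otherwise divide on the right by `T_uu` and use a row operation. Such an operation only changes
blocks `(t', u')` with `t' ≤ t` and `u ≤ u'`, so the diagonal blocks are never touched, and
treating the blocks one superdiagonal at a time never spoils a block that is already reduced.
-/
open Polynomial

/-- Unimodular equivalence of square matrix polynomials. -/
def UnimodEquiv {F : Type*} [Field F] {n : ℕ}
    (P Q : Matrix (Fin n) (Fin n) F[X]) : Prop :=
  ∃ U V : Matrix (Fin n) (Fin n) F[X], IsUnit U.det ∧ IsUnit V.det ∧ Q = U * P * V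

/-- The (square) block of `T` with row and column indices in `[lo, hi)`. -/
noncomputable def blockOf {F : Type*} [Field F] {n : ℕ} (T : Matrix (Fin n) (Fin n) F[X])
    (lo hi : ℕ) : Matrix (Fin (hi - lo)) (Fin (hi - lo)) F[X] :=
  Matrix.of fun a b =>
    if h : lo + (a : ℕ) < n ∧ lo + (b : ℕ) < n then T ⟨lo + (a : ℕ), h.1⟩ ⟨lo + (b : ℕ), h.2⟩
    else 0

section Division

variable {F : Type*} [Field F] {m p : Type*} [Fintype m] [DecidableEq m]

def IsStrictlyRegularOfDegree (S : Matrix m m F[X]) (d : ℕ) : Prop :=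
  (∀ a b, (S a b).degree ≤ d) ∧ IsUnit (S.map (coeff · d)).det

namespace IsStrictlyRegularOfDegree

variable {S : Matrix m m F[X]} {d : ℕ}

theorem transpose (hS : IsStrictlyRegularOfDegree S d) :
    IsStrictlyRegularOfDegree S.transpose d :=
  ⟨fun a b => hS.1 b a, by rw [Matrix.transpose_map, Matrix.det_transpose]; exact hS.2⟩

theorem of_submatrix_equiv {m' : Type*} [Fintype m'] [DecidableEq m'] (e : m' ≃ m)
    (hS : IsStrictlyRegularOfDegree (S.submatrix e e) d) : IsStrictlyRegularOfDegree S d :=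
  ⟨fun a b => by simpa using hS.1 (e.symm a) (e.symm b), by
    simpa [← Matrix.submatrix_map, Matrix.det_submatrix_equiv_self] using hS.2⟩

theorem of_isEmpty [IsEmpty m] (S : Matrix m m F[X]) (d : ℕ) : IsStrictlyRegularOfDegree S d :=
  ⟨isEmptyElim, by simp⟩

theorem exists_eq_mul_add_of_degree_lt (hS : IsStrictlyRegularOfDegree S d) (N : ℕ) :
    ∀ A : Matrix m p F[X], (∀ a b, (A a b).degree < ↑(d + N)) →
      ∃ Q R : Matrix m p F[X], A = S * Q + R ∧ ∀ a b, (R a b).degree < d := by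
  induction N with
  | zero => exact fun A hA => ⟨0, A, by simp, hA⟩
  | succ N ih =>
    intro A hA
    -- `Y` makes the degree `d + N` coefficient matrix of `S * Q₀` equal to that of `A`.
    set Y := (S.map (coeff · d))⁻¹ * A.map (coeff · (d + N))
    set Q₀ : Matrix m p F[X] := Matrix.of fun c b => C (Y c b) * X ^ N
    have hcoeff : ∀ a b k, ((S * Q₀) a b).coeff (k + N) = (S.map (coeff · k) * Y) a b := by
      intro a b k
      simp [Q₀, Matrix.mul_apply, ← mul_assoc, coeff_mul_X_pow]
    obtain ⟨Q, R, hQR, hR⟩ := ih (A - S * Q₀) fun a b => by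
      rw [degree_lt_iff_coeff_zero]
      intro k hk
      obtain ⟨j, rfl⟩ : ∃ j, k = j + N := ⟨k - N, by omega⟩
      rw [Matrix.sub_apply, coeff_sub, hcoeff]
      rcases (Nat.le_of_add_le_add_right hk).eq_or_lt with rfl | hj
      · rw [Matrix.mul_nonsing_inv_cancel_left _ _ hS.2]
        simp
      · have hA0 : (A a b).coeff (j + N) = 0 :=
          coeff_eq_zero_of_degree_lt ((hA a b).trans_le (by exact_mod_cast (by omega)))
        have hS0 : S.map (coeff · j) = 0 := by
          ext a' c
          exact coeff_eq_zero_of_degree_lt ((hS.1 a' c).trans_lt (by exact_mod_cast hj))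
        simp [hA0, hS0]
    exact ⟨Q₀ + Q, R, by rw [Matrix.mul_add, add_assoc, ← hQR]; abel, hR⟩

theorem exists_eq_mul_add [Fintype p] (hS : IsStrictlyRegularOfDegree S d)
    (A : Matrix m p F[X]) :
    ∃ Q R : Matrix m p F[X], A = S * Q + R ∧ ∀ a b, (R a b).degree < d := by
  obtain ⟨N, hN⟩ := Finite.exists_le fun x : m × p => (A x.1 x.2).natDegree
  refine hS.exists_eq_mul_add_of_degree_lt (N + 1) A fun a b => ?_
  calc (A a b).degree ≤ (A a b).natDegree := degree_le_natDegree
    _ < ↑(d + (N + 1)) := by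
      have : (A a b).natDegree ≤ N := hN (a, b)
      exact_mod_cast (by omega)

end IsStrictlyRegularOfDegree

end Division

namespace Matrix

variable {ι R : Type*} {p q : ι → Prop} [DecidablePred p] [DecidablePred q]

def extendBlock [Zero R] (Q : Matrix {i // p i} {j // q j} R) : Matrix ι ι R :=
  of fun i j => if h : p i ∧ q j then Q ⟨i, h.1⟩ ⟨j, h.2⟩ else 0

theorem mul_extendBlock_apply [NonUnitalNonAssocSemiring R] [Fintype ι] {l : Type*}
    (M : Matrix l ι R) (Q : Matrix {i // p i} {j // q j} R) (i : l) (j : ι) :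
    (M * extendBlock Q) i j = if h : q j then ∑ k : {k // p k}, M i k * Q k ⟨j, h⟩ else 0 := by
  by_cases hj : q j
  · rw [dif_pos hj, mul_apply, ← Fintype.sum_subtype_add_sum_subtype p,
      Fintype.sum_eq_zero (fun k : {k // ¬p k} => M i k * extendBlock Q k j)
        fun k => by simp [extendBlock, k.2], add_zero]
    exact Fintype.sum_congr _ _ fun k => by simp [extendBlock, k.2, hj]
  · simp [mul_apply, extendBlock, hj]

theorem extendBlock_mul_extendBlock [NonUnitalNonAssocSemiring R] [Fintype ι]
    (hpq : ∀ i, q i → ¬p i) (Q Q' : Matrix {i // p i} {j // q j} R) :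
    extendBlock Q * extendBlock Q' = 0 := by
  ext i j
  refine Finset.sum_eq_zero fun k _ => ?_
  by_cases hk : q k
  · simp [extendBlock, hpq k hk]
  · simp [extendBlock, hk]

theorem isUnit_det_one_add_extendBlock [CommRing R] [Fintype ι] [DecidableEq ι]
    (hpq : ∀ i, q i → ¬p i) (Q : Matrix {i // p i} {j // q j} R) :
    IsUnit (1 + extendBlock Q).det := by
  refine isUnit_det_of_right_inverse (B := 1 - extendBlock Q) ?_
  rw [mul_sub, mul_one, add_mul, one_mul, extendBlock_mul_extendBlock hpq]
  abel

end Matrix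

namespace UnimodEquiv

variable {F : Type*} [Field F] {n : ℕ} {P Q R : Matrix (Fin n) (Fin n) F[X]}

protected theorem refl (P : Matrix (Fin n) (Fin n) F[X]) : UnimodEquiv P P :=
  ⟨1, 1, by simp, by simp, by simp⟩

protected theorem trans (hPQ : UnimodEquiv P Q) (hQR : UnimodEquiv Q R) : UnimodEquiv P R := by
  obtain ⟨U, V, hU, hV, rfl⟩ := hPQ
  obtain ⟨U', V', hU', hV', rfl⟩ := hQR
  exact ⟨U' * U, V * V', by simpa using hU'.mul hU, by simpa using hV.mul hV',
    by simp only [Matrix.mul_assoc]⟩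

protected theorem transpose (h : UnimodEquiv P Q) : UnimodEquiv P.transpose Q.transpose := by
  obtain ⟨U, V, hU, hV, rfl⟩ := h
  exact ⟨V.transpose, U.transpose, by simpa using hV, by simpa using hU,
    by simp only [Matrix.transpose_mul, Matrix.mul_assoc]⟩

theorem mul_right_of_isUnit_det (P : Matrix (Fin n) (Fin n) F[X])
    {W : Matrix (Fin n) (Fin n) F[X]} (hW : IsUnit W.det) : UnimodEquiv P (P * W) :=
  ⟨1, W, by simp, hW, by simp⟩

end UnimodEquiv

namespace Matrix.BlockTriangular

open OrderDual

variable {F : Type*} [Field F] {α : Type*} [LinearOrder α] {n : ℕ} {b : Fin n → α}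
  {M : Matrix (Fin n) (Fin n) F[X]} {t u : α} {e : ℕ}

theorem exists_reduce_mod_left (hM : M.BlockTriangular b) (htu : t < u)
    (hS : IsStrictlyRegularOfDegree (M.toSquareBlock b t) e) :
    ∃ M', UnimodEquiv M M' ∧ (∀ i j, b i = t → b j = u → (M' i j).degree < e) ∧
      ∀ i j, ¬(b i ≤ t ∧ u ≤ b j) → M' i j = M i j := by
  obtain ⟨Q, R, hQR, hR⟩ := hS.exists_eq_mul_add (M.toBlock (b · = t) (b · = u))
  have hdisj : ∀ i, b i = u → ¬b i = t := fun i hi hi' => htu.ne (hi' ▸ hi)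
  have happly : ∀ i j, (M * (1 + extendBlock (-Q))) i j = M i j +
      if h : b j = u then ∑ k : {k // b k = t}, M i k * (-Q) k ⟨j, h⟩ else 0 := fun i j => by
    rw [Matrix.mul_add, Matrix.mul_one, add_apply, mul_extendBlock_apply]
  refine ⟨M * (1 + extendBlock (-Q)),
    UnimodEquiv.mul_right_of_isUnit_det M (isUnit_det_one_add_extendBlock hdisj (-Q)),
    fun i j hi hj => ?_, fun i j hij => ?_⟩
  · rw [happly, dif_pos hj, show M i j = _ from congrFun₂ hQR ⟨i, hi⟩ ⟨j, hj⟩]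
    simpa [Matrix.mul_apply, toSquareBlock_def] using hR ⟨i, hi⟩ ⟨j, hj⟩
  · rw [happly]
    split_ifs with hj
    · rw [Finset.sum_eq_zero fun k _ => ?_, add_zero]
      rw [hM (k.2.trans_lt (not_le.mp fun hi => hij ⟨hi, hj.ge⟩)), zero_mul]
    · rw [add_zero]

theorem exists_reduce_mod_right (hM : M.BlockTriangular b) (htu : t < u)
    (hS : IsStrictlyRegularOfDegree (M.toSquareBlock b u) e) :
    ∃ M', UnimodEquiv M M' ∧ (∀ i j, b i = t → b j = u → (M' i j).degree < e) ∧
      ∀ i j, ¬(b i ≤ t ∧ u ≤ b j) → M' i j = M i j := by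
  obtain ⟨N, hMN, hred, hsame⟩ := exists_reduce_mod_left (b := toDual ∘ b) hM.transpose
    (toDual_lt_toDual.mpr htu) (e := e) hS.transpose
  refine ⟨N.transpose, by simpa using hMN.transpose,
    fun i j hi hj => hred j i (by simpa) (by simpa), fun i j hij => hsame j i ?_⟩
  simpa [and_comm] using hij

end Matrix.BlockTriangular

section Reduction

variable {F : Type*} [Field F] {α : Type*} [LinearOrder α] {n : ℕ} (b : Fin n → α)
  (d : α → ℕ)

def IsReducedAt (M : Matrix (Fin n) (Fin n) F[X]) (t u : α) : Prop :=
  ∀ i j, b i = t → b j = u → (M i j).degree < ↑(min (d t) (d u))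

def BlockTriangularEquiv (T M : Matrix (Fin n) (Fin n) F[X]) : Prop :=
  UnimodEquiv T M ∧ M.BlockTriangular b ∧ ∀ k, M.toSquareBlock b k = T.toSquareBlock b k

variable {b d} {T M M' : Matrix (Fin n) (Fin n) F[X]} {t u : α}

theorem IsReducedAt.of_eq_of_not_le {t' u' : α} (h : IsReducedAt b d M t' u')
    (hM' : ∀ i j, ¬(b i ≤ t ∧ u ≤ b j) → M' i j = M i j) (htu' : ¬(t' ≤ t ∧ u ≤ u')) :
    IsReducedAt b d M' t' u' := fun i j hi hj => by
  rw [hM' i j (by rwa [hi, hj])]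
  exact h i j hi hj

theorem BlockTriangularEquiv.exists_reduce (hM : BlockTriangularEquiv b T M)
    (hT : ∀ k, IsStrictlyRegularOfDegree (T.toSquareBlock b k) (d k)) (htu : t < u) :
    ∃ M', BlockTriangularEquiv b T M' ∧ IsReducedAt b d M' t u ∧
      ∀ i j, ¬(b i ≤ t ∧ u ≤ b j) → M' i j = M i j := by
  obtain ⟨hTM, hMtri, hMdiag⟩ := hM
  obtain ⟨M', hMM', hred, hsame⟩ : ∃ M', UnimodEquiv M M' ∧
      (∀ i j, b i = t → b j = u → (M' i j).degree < ↑(min (d t) (d u))) ∧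
      ∀ i j, ¬(b i ≤ t ∧ u ≤ b j) → M' i j = M i j := by
    rcases le_total (d t) (d u) with hd | hd
    · rw [min_eq_left hd]
      exact hMtri.exists_reduce_mod_left htu (hMdiag t ▸ hT t)
    · rw [min_eq_right hd]
      exact hMtri.exists_reduce_mod_right htu (hMdiag u ▸ hT u)
  have hdiag : ∀ i j, b j ≤ b i → M' i j = M i j := fun i j hji =>
    hsame i j fun h => (h.1.trans_lt (htu.trans_le h.2)).not_ge hji
  refine ⟨M', ⟨hTM.trans hMM', fun i j hji => ?_, fun k => ?_⟩, hred, hsame⟩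
  · rw [hdiag i j hji.le, hMtri hji]
  · rw [← hMdiag k]
    exact Matrix.ext fun i j => hdiag i j (j.2.trans i.2.symm).le

end Reduction

section Band

variable {F : Type*} [Field F] {n : ℕ} {b : Fin n → ℕ} {d : ℕ → ℕ}
  {T : Matrix (Fin n) (Fin n) F[X]}

def IsBandReduced (b : Fin n → ℕ) (d : ℕ → ℕ) (M : Matrix (Fin n) (Fin n) F[X]) (K w : ℕ) :
    Prop :=
  ∀ t u, t < K → t < u → u ≤ t + w → IsReducedAt b d M t u

theorem BlockTriangularEquiv.exists_reduce_next_diagonal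
    (hT : ∀ k, IsStrictlyRegularOfDegree (T.toSquareBlock b k) (d k))
    {M : Matrix (Fin n) (Fin n) F[X]} (hM : BlockTriangularEquiv b T M) {K w : ℕ}
    (hband : IsBandReduced b d M K w) (k : ℕ) :
    ∃ M', BlockTriangularEquiv b T M' ∧ IsBandReduced b d M' K w ∧
      ∀ t < k, IsReducedAt b d M' t (t + w + 1) := by
  induction k with
  | zero => exact ⟨M, hM, hband, fun t ht => absurd ht t.not_lt_zero⟩
  | succ k ih =>
    obtain ⟨M₁, h₁, hband₁, hdone₁⟩ := ih
    obtain ⟨M₂, h₂, hred, hsame⟩ := h₁.exists_reduce hT (t := k) (u := k + w + 1) (by omega)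
    refine ⟨M₂, h₂, fun t u ht htu hu => (hband₁ t u ht htu hu).of_eq_of_not_le hsame (by omega),
      fun t ht => ?_⟩
    rcases Nat.lt_succ_iff_lt_or_eq.mp ht with ht | rfl
    · exact (hdone₁ t ht).of_eq_of_not_le hsame (by omega)
    · exact hred

theorem exists_isBandReduced (hT : ∀ k, IsStrictlyRegularOfDegree (T.toSquareBlock b k) (d k))
    (hTtri : T.BlockTriangular b) (K : ℕ) :
    ∀ w, ∃ M, BlockTriangularEquiv b T M ∧ IsBandReduced b d M K w
  | 0 => ⟨T, ⟨UnimodEquiv.refl T, hTtri, fun _ => rfl⟩, fun t u _ htu hu => by omega⟩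
  | w + 1 => by
    obtain ⟨M, hM, hband⟩ := exists_isBandReduced hT hTtri K w
    obtain ⟨M', hM', hband', hdone⟩ := hM.exists_reduce_next_diagonal hT hband K
    refine ⟨M', hM', fun t u ht htu hu => ?_⟩
    rcases hu.lt_or_eq with hu | rfl
    · exact hband' t u ht htu (by omega)
    · exact hdone t ht

end Band

section Partition

variable {ns : ℕ → ℕ} {s n : ℕ}

def blockIndex (ns : ℕ → ℕ) (s x : ℕ) : ℕ :=
  Nat.findGreatest (fun t => ns t ≤ x) s

theorem blockIndex_eq_iff (h0 : ns 0 = 0) (hns : StrictMonoOn ns (Set.Iic s)) {x t : ℕ}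
    (hx : x < ns s) :
    blockIndex ns s x = t ↔ t < s ∧ ns t ≤ x ∧ x < ns (t + 1) := by
  rw [blockIndex, Nat.findGreatest_eq_iff]
  constructor
  · rintro ⟨hts, hPt, hmax⟩
    have htx : ns t ≤ x := by
      rcases eq_or_ne t 0 with rfl | ht
      · omega
      · exact hPt ht
    have hts : t < s := lt_of_le_of_ne hts (by rintro rfl; omega)
    exact ⟨hts, htx, not_le.mp (hmax (Nat.lt_succ_self t) hts)⟩
  · rintro ⟨hts, htx, hxt⟩
    refine ⟨hts.le, fun _ => htx, fun k htk hks hk => ?_⟩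
    have := hns.monotoneOn (Set.mem_Iic.mpr (show t + 1 ≤ s from hts)) (Set.mem_Iic.mpr hks)
      htk
    omega

theorem blockTriangular_blockIndex_iff {R : Type*} [Zero R] (h0 : ns 0 = 0)
    (hns : StrictMonoOn ns (Set.Iic s)) (hlast : ns s = n) (M : Matrix (Fin n) (Fin n) R) :
    M.BlockTriangular (fun i : Fin n => blockIndex ns s i) ↔
      ∀ t ≤ s, ∀ i j : Fin n, ns t ≤ i → j < ns t → M i j = 0 := by
  have hspec (i : Fin n) : blockIndex ns s i < s ∧ ns (blockIndex ns s i) ≤ i ∧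
      i < ns (blockIndex ns s i + 1) :=
    (blockIndex_eq_iff h0 hns (hlast ▸ i.isLt)).mp rfl
  have hmono {a c : ℕ} (hac : a ≤ c) (hcs : c ≤ s) : ns a ≤ ns c :=
    hns.monotoneOn (Set.mem_Iic.mpr (hac.trans hcs)) (Set.mem_Iic.mpr hcs) hac
  constructor
  · intro h t ht i j hi hj
    obtain ⟨-, -, hi2⟩ := hspec i
    obtain ⟨hj, hj1, -⟩ := hspec j
    refine h (lt_of_lt_of_le (b := t) ?_ ?_)
    · by_contra! htj
      have := hmono htj hj.le
      omega
    · by_contra! hti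
      have := hmono (a := blockIndex ns s i + 1) hti ht
      omega
  · intro h i j hji
    obtain ⟨hi, hi1, -⟩ := hspec i
    obtain ⟨-, -, hj2⟩ := hspec j
    exact h _ hi.le i j hi1 (hj2.trans_le (hmono hji hi.le))

def blockEquiv (h0 : ns 0 = 0) (hns : StrictMonoOn ns (Set.Iic s)) (hlast : ns s = n) {t : ℕ}
    (ht : t < s) : Fin (ns (t + 1) - ns t) ≃ {i : Fin n // blockIndex ns s i = t} where
  toFun a := ⟨⟨ns t + a, by
      have := hns.monotoneOn (Set.mem_Iic.mpr (show t + 1 ≤ s from ht)) (Set.mem_Iic.mpr le_rfl)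
        (show t + 1 ≤ s from ht)
      omega⟩,
    (blockIndex_eq_iff h0 hns (by omega)).mpr ⟨ht, by simp, by simp; omega⟩⟩
  invFun i := ⟨i - ns t, by
    have := (blockIndex_eq_iff h0 hns (hlast ▸ i.1.isLt)).mp i.2
    omega⟩
  left_inv a := by ext; simp
  right_inv i := by
    have := (blockIndex_eq_iff h0 hns (hlast ▸ i.1.isLt)).mp i.2
    ext; simp; omega

theorem blockOf_eq_submatrix_blockEquiv {R : Type*} [Field R] (h0 : ns 0 = 0)
    (hns : StrictMonoOn ns (Set.Iic s)) (hlast : ns s = n) {t : ℕ} (ht : t < s)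
    (M : Matrix (Fin n) (Fin n) R[X]) :
    blockOf M (ns t) (ns (t + 1)) =
      (M.toSquareBlock (fun i : Fin n => blockIndex ns s i) t).submatrix
        (blockEquiv h0 hns hlast ht) (blockEquiv h0 hns hlast ht) := by
  ext a c : 1
  exact dif_pos ⟨(blockEquiv h0 hns hlast ht a).1.isLt, (blockEquiv h0 hns hlast ht c).1.isLt⟩

end Partition

theorem statement_12_general {F : Type*} [Field F] {n : ℕ}
    (T : Matrix (Fin n) (Fin n) F[X])
    (s : ℕ) (ns : ℕ → ℕ)
    (h0 : ns 0 = 0) (hlast : ns s = n)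
    (hmono : ∀ t, t < s → ns t < ns (t + 1))
    -- T is block upper triangular with respect to the partition
    (hblocktri : ∀ t, t ≤ s → ∀ i j : Fin n, ns t ≤ (i : ℕ) → (j : ℕ) < ns t → T i j = 0)
    -- each diagonal block is strictly regular, of degree d t with invertible
    -- leading coefficient
    (d : ℕ → ℕ)
    (hblocks : ∀ t, t < s →
      (∀ a b, ((blockOf T (ns t) (ns (t + 1))) a b).degree ≤ ((d t : ℕ) : WithBot ℕ)) ∧
      (∃ a b, ((blockOf T (ns t) (ns (t + 1))) a b).degree = ((d t : ℕ) : WithBot ℕ)) ∧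
      IsUnit (Matrix.of fun a b => ((blockOf T (ns t) (ns (t + 1))) a b).coeff (d t)).det) :
    ∃ T' : Matrix (Fin n) (Fin n) F[X],
      -- T' is block upper triangular with respect to the same partition
      (∀ t, t ≤ s → ∀ i j : Fin n, ns t ≤ (i : ℕ) → (j : ℕ) < ns t → T' i j = 0) ∧
      -- T' is unimodularly equivalent to T
      UnimodEquiv T T' ∧
      -- the diagonal blocks coincide with those of T
      (∀ t, t < s → blockOf T' (ns t) (ns (t + 1)) = blockOf T (ns t) (ns (t + 1))) ∧
      -- off-diagonal blocks have entries zero or of degree < min (d t) (d u)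
      (∀ t u, t < u → u < s → ∀ i j : Fin n,
        ns t ≤ (i : ℕ) → (i : ℕ) < ns (t + 1) → ns u ≤ (j : ℕ) → (j : ℕ) < ns (u + 1) →
        T' i j = 0 ∨ (T' i j).natDegree < min (d t) (d u)) := by
  have hns : StrictMonoOn ns (Set.Iic s) := strictMonoOn_Iic_of_lt_succ hmono
  set b : Fin n → ℕ := fun i => blockIndex ns s i
  have hb (i : Fin n) (t : ℕ) : b i = t ↔ t < s ∧ ns t ≤ i ∧ i < ns (t + 1) :=
    blockIndex_eq_iff h0 hns (hlast ▸ i.isLt)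
  have hT (t : ℕ) : IsStrictlyRegularOfDegree (T.toSquareBlock b t) (d t) := by
    by_cases ht : t < s
    · refine .of_submatrix_equiv (blockEquiv h0 hns hlast ht) ?_
      rw [← blockOf_eq_submatrix_blockEquiv]
      exact ⟨(hblocks t ht).1, (hblocks t ht).2.2⟩
    · have : IsEmpty {i // b i = t} := ⟨fun i => ht ((hb i t).mp i.2).1⟩
      exact .of_isEmpty _ _
  obtain ⟨M, ⟨hTM, hMtri, hMdiag⟩, hband⟩ := exists_isBandReduced hT
    ((blockTriangular_blockIndex_iff h0 hns hlast T).mpr hblocktri) s s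
  refine ⟨M, (blockTriangular_blockIndex_iff h0 hns hlast M).mp hMtri, hTM, fun t ht => ?_,
    fun t u htu hus i j hi hi' hj hj' => ?_⟩
  · rw [blockOf_eq_submatrix_blockEquiv h0 hns hlast ht,
      blockOf_eq_submatrix_blockEquiv h0 hns hlast ht, hMdiag]
  · have hdeg := hband t u (by omega) htu (by omega) i j ((hb i t).mpr ⟨by omega, hi, hi'⟩)
      ((hb j u).mpr ⟨hus, hj, hj'⟩)
    exact or_iff_not_imp_left.mpr fun h => (natDegree_lt_iff_degree_lt h).mpr hdeg

theorem statement_12 {F : Type*} [Field F] {n : ℕ}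
    (T : Matrix (Fin n) (Fin n) F[X])
    (s : ℕ) (hs : 0 < s) (ns : ℕ → ℕ)
    (h0 : ns 0 = 0) (hlast : ns s = n)
    (hmono : ∀ t, t < s → ns t < ns (t + 1))
    -- T is block upper triangular with respect to the partition
    (hblocktri : ∀ t, t ≤ s → ∀ i j : Fin n, ns t ≤ (i : ℕ) → (j : ℕ) < ns t → T i j = 0)
    -- each diagonal block is strictly regular, of degree d t with invertible
    -- leading coefficient
    (d : ℕ → ℕ)
    (hblocks : ∀ t, t < s →
      (∀ a b, ((blockOf T (ns t) (ns (t + 1))) a b).degree ≤ ((d t : ℕ) : WithBot ℕ)) ∧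
      (∃ a b, ((blockOf T (ns t) (ns (t + 1))) a b).degree = ((d t : ℕ) : WithBot ℕ)) ∧
      IsUnit (Matrix.of fun a b => ((blockOf T (ns t) (ns (t + 1))) a b).coeff (d t)).det) :
    ∃ T' : Matrix (Fin n) (Fin n) F[X],
      -- T' is block upper triangular with respect to the same partition
      (∀ t, t ≤ s → ∀ i j : Fin n, ns t ≤ (i : ℕ) → (j : ℕ) < ns t → T' i j = 0) ∧
      -- T' is unimodularly equivalent to T
      UnimodEquiv T T' ∧
      -- the diagonal blocks coincide with those of T
      (∀ t, t < s → blockOf T' (ns t) (ns (t + 1)) = blockOf T (ns t) (ns (t + 1))) ∧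
      -- off-diagonal blocks have entries zero or of degree < min (d t) (d u)
      (∀ t u, t < u → u < s → ∀ i j : Fin n,
        ns t ≤ (i : ℕ) → (i : ℕ) < ns (t + 1) → ns u ≤ (j : ℕ) → (j : ℕ) < ns (u + 1) →
        T' i j = 0 ∨ (T' i j).natDegree < min (d t) (d u)) :=
  statement_12_general T s ns h0 hlast hmono hblocktri d hblocks
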